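/- Let f ≥ 1 and w ≥ 2 be natural numbers, s > 0, α ∈ ℝ, and N ∈ ℕ with N ≥ w. Let T : ℝ → ℝ^f be continuous and injective. Set t_i = α + (i−1)·s for 1 ≤ i ≤ N, and w_s = (w−1)·s. For 1 ≤ i ≤ N − w + 1 let v_i ∈ ℝ^{w·f} be the concatenation (T(t_i), T(t_{i+1}), …, T(t_{i+w−1})). Let a_1, …, a_n ∈ ℝ be finitely many event start times (n ≥ 1) and set y_i = max_{1 ≤ k ≤ n} J_{w_s, a_k}(t_i). Then for every ε > 0 there exist Q ∈ ℕ, coefficients β_1, …, β_Q ∈ ℝ, weight vectors u_1, …, u_Q ∈ ℝ^{w·f}, and biases b_1, …, b_Q ∈ ℝ such that |∑_{j=1}^{Q} β_j σ(⟨u_j, v_i⟩ + b_j) − y_i| < ε for every i with 1 ≤ i ≤ N − w + 1. -/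

import Mathlib

/-!
The first `f` coordinates of the window vector `v i` are `T (t i)`, so injectivity of `T` makes
the `v i` pairwise distinct. A generic direction `c` keeps them distinct after projecting to
`x i = ⟪c, v i⟫`; if `δ` is smaller than every gap between the `x i`, then as `K → ∞` the
network `∑ₖ y k (σ(K (x - x k + δ)) - σ(K (x - x k - δ)))` tends at `x = x i` to `y i`, each
summand being in the limit the indicator of `(x k - δ, x k + δ)`.
-/

/-- The logistic sigmoid squashing function `σ(u) = 1/(1 + e^{-u})`. -/
noncomputable def sigmoid (u : ℝ) : ℝ := 1 / (1 + Real.exp (-u))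

/-- The overlap (Jaccard similarity) function `J_{L,a}(t)`, measuring the Jaccard similarity
of the length-`L` intervals `[t, t+L]` and `[a, a+L]`. -/
noncomputable def overlapJ (L a t : ℝ) : ℝ :=
  if |t - a| < L then (L - |t - a|) / (L + |t - a|) else 0

open Filter Topology Function Set

lemma sigmoid_eq_real_sigmoid : sigmoid = Real.sigmoid := by
  funext u
  rw [sigmoid, Real.sigmoid_def, one_div]

lemma tendsto_sigmoid_mul_atTop {d : ℝ} (hd : d ≠ 0) :
    Tendsto (fun K : ℝ => sigmoid (K * d)) atTop (𝓝 (if 0 < d then 1 else 0)) := by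
  rw [sigmoid_eq_real_sigmoid]
  rcases hd.lt_or_gt with hneg | hpos
  · rw [if_neg hneg.not_gt]
    exact Real.tendsto_sigmoid_atBot.comp (tendsto_id.atTop_mul_const_of_neg hneg)
  · rw [if_pos hpos]
    exact Real.tendsto_sigmoid_atTop.comp (tendsto_id.atTop_mul_const hpos)

lemma tendsto_sigmoid_bump {d δ : ℝ} (hδ : 0 < δ) (hd : |d| ≠ δ) :
    Tendsto (fun K : ℝ => sigmoid (K * (d + δ)) - sigmoid (K * (d - δ))) atTop
      (𝓝 (if |d| < δ then 1 else 0)) := by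
  have hplus : d + δ ≠ 0 := fun h =>
    hd (by rw [eq_neg_of_add_eq_zero_left h, abs_neg, abs_of_pos hδ])
  have hminus : d - δ ≠ 0 := fun h => hd (by rw [sub_eq_zero.1 h, abs_of_pos hδ])
  convert (tendsto_sigmoid_mul_atTop hplus).sub (tendsto_sigmoid_mul_atTop hminus) using 2
  simp only [abs_lt]
  split_ifs <;> grind

lemma exists_pos_lt_abs_sub {ι : Type*} (s : Finset ι) (x : ι → ℝ) :
    ∃ δ > 0, ∀ i ∈ s, ∀ j ∈ s, x i ≠ x j → δ < |x i - x j| := by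
  have hsmall : ∀ᶠ δ in 𝓝[>] (0 : ℝ),
      ∀ i ∈ s, ∀ j ∈ s, x i ≠ x j → δ < |x i - x j| := by
    simp only [eventually_all_finset, eventually_imp_distrib_left]
    exact fun i _ j _ hij =>
      nhdsWithin_le_nhds (eventually_lt_nhds (abs_pos.2 (sub_ne_zero.2 hij)))
  obtain ⟨δ, hδ, hpos⟩ := (hsmall.and self_mem_nhdsWithin).exists
  exact ⟨δ, hpos, hδ⟩

lemma tendsto_sum_sigmoid_bump {ι : Type*} (s : Finset ι) {x : ι → ℝ} (hx : InjOn x s)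
    (y : ι → ℝ) {δ : ℝ} (hδ : 0 < δ)
    (hgap : ∀ i ∈ s, ∀ j ∈ s, x i ≠ x j → δ < |x i - x j|) {i : ι} (hi : i ∈ s) :
    Tendsto (fun K : ℝ => ∑ k ∈ s,
        y k * (sigmoid (K * (x i - x k + δ)) - sigmoid (K * (x i - x k - δ)))) atTop
      (𝓝 (y i)) := by
  classical
  have hindicator : ∀ k ∈ s, |x i - x k| < δ ↔ i = k := by
    intro k hk
    refine ⟨fun hlt => ?_, fun hik => by rw [hik, sub_self, abs_zero]; exact hδ⟩
    by_contra hik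
    exact (hgap i hi k hk (hx.ne hi hk hik)).not_gt hlt
  have hne : ∀ k ∈ s, |x i - x k| ≠ δ := by
    intro k hk heq
    by_cases hik : i = k
    · rw [hik, sub_self, abs_zero] at heq
      exact hδ.ne heq
    · exact (hgap i hi k hk (hx.ne hi hk hik)).ne' heq
  have hlim := tendsto_finsetSum s fun k hk =>
    (tendsto_sigmoid_bump hδ (hne k hk)).const_mul (y k)
  convert hlim using 2
  rw [Finset.sum_congr rfl fun k hk => by rw [if_congr (hindicator k hk) rfl rfl]]
  simp only [mul_ite, mul_one, mul_zero, Finset.sum_ite_eq, if_pos hi]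

lemma exists_injOn_inner {E ι : Type*} [NormedAddCommGroup E] [InnerProductSpace ℝ E]
    (s : Finset ι) {v : ι → E} (hv : InjOn v s) :
    ∃ c : E, InjOn (fun i => inner ℝ c (v i)) s := by
  by_contra! hnone
  have hcover : ⋃ p : s.offDiag, ((ℝ ∙ (v p.1.1 - v p.1.2))ᗮ : Set E) = univ := by
    refine eq_univ_of_forall fun c => ?_
    have hc := hnone c
    simp only [InjOn, Finset.mem_coe, not_forall] at hc
    obtain ⟨i, hi, j, hj, hcij, hij⟩ := hc
    refine mem_iUnion.2 ⟨⟨(i, j), Finset.mem_offDiag.2 ⟨hi, hj, hij⟩⟩, ?_⟩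
    rw [SetLike.mem_coe, Submodule.mem_orthogonal_singleton_iff_inner_left, inner_sub_right]
    exact sub_eq_zero.2 hcij
  obtain ⟨⟨⟨i, j⟩, hij⟩, htop⟩ := Subspace.exists_eq_top_of_iUnion_eq_univ hcover
  obtain ⟨hi, hj, hne⟩ := Finset.mem_offDiag.1 hij
  rw [Submodule.orthogonal_eq_top_iff, Submodule.span_singleton_eq_bot, sub_eq_zero] at htop
  exact hne (hv hi hj htop)

section SigmoidNetworks

variable {E : Type*} [NormedAddCommGroup E] [InnerProductSpace ℝ E]

variable (E) in
def sigmoidNetworks : Submodule ℝ (E → ℝ) :=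
  Submodule.span ℝ (range fun p : E × ℝ => fun x => sigmoid (inner ℝ p.1 x + p.2))

lemma sigmoid_inner_add_mem_sigmoidNetworks (u : E) (b : ℝ) :
    (fun x => sigmoid (inner ℝ u x + b)) ∈ sigmoidNetworks E :=
  Submodule.subset_span ⟨(u, b), rfl⟩

lemma exists_eq_sum_of_mem_sigmoidNetworks {g : E → ℝ} (hg : g ∈ sigmoidNetworks E) :
    ∃ (Q : ℕ) (β : Fin Q → ℝ) (u : Fin Q → E) (b : Fin Q → ℝ),
      ∀ x, ∑ j, β j * sigmoid (inner ℝ (u j) x + b j) = g x := by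
  obtain ⟨Q, β, h, hsum⟩ := Submodule.mem_span_set'.1 hg
  choose p hp using fun j => (h j).2
  refine ⟨Q, β, fun j => (p j).1, fun j => (p j).2, fun x => ?_⟩
  rw [← hsum, Finset.sum_apply]
  exact Finset.sum_congr rfl fun j _ => by rw [← hp j]; rfl

theorem exists_mem_sigmoidNetworks_forall_abs_sub_lt {ι : Type*} (s : Finset ι) {v : ι → E}
    (hv : InjOn v s) (y : ι → ℝ) {ε : ℝ} (hε : 0 < ε) :
    ∃ g ∈ sigmoidNetworks E, ∀ i ∈ s, |g (v i) - y i| < ε := by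
  obtain ⟨c, hc⟩ := exists_injOn_inner s hv
  set x := fun i => inner ℝ c (v i)
  obtain ⟨δ, hδ, hgap⟩ := exists_pos_lt_abs_sub s x
  set F : ℝ → E → ℝ := fun K => ∑ k ∈ s,
    y k • ((fun z => sigmoid (inner ℝ (K • c) z + K * (δ - x k))) -
      fun z => sigmoid (inner ℝ (K • c) z + K * (-δ - x k)))
  have hF : ∀ K, F K ∈ sigmoidNetworks E := fun K =>
    Submodule.sum_mem _ fun k _ => Submodule.smul_mem _ (y k) <| Submodule.sub_mem _
      (sigmoid_inner_add_mem_sigmoidNetworks _ _) (sigmoid_inner_add_mem_sigmoidNetworks _ _)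
  have hFv : ∀ K, ∀ i, F K (v i) = ∑ k ∈ s, y k *
      (sigmoid (K * (x i - x k + δ)) - sigmoid (K * (x i - x k - δ))) := by
    intro K i
    simp only [F, x, Finset.sum_apply, Pi.smul_apply, Pi.sub_apply, smul_eq_mul,
      real_inner_smul_left]
    congr! 4 <;> ring
  have hclose : ∀ᶠ K in atTop, ∀ i ∈ s, |F K (v i) - y i| < ε := by
    rw [eventually_all_finset]
    intro i hi
    have hlim := tendsto_sum_sigmoid_bump s hc y hδ hgap hi
    filter_upwards [Metric.tendsto_nhds.1 hlim ε hε] with K hK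
    rwa [hFv, ← Real.dist_eq]
  obtain ⟨K, hK⟩ := hclose.exists
  exact ⟨F K, hF K, hK⟩

end SigmoidNetworks

lemma injective_of_eq_window {f w : ℕ} (hf : 0 < f) (hw : 0 < w)
    {T : ℝ → EuclideanSpace ℝ (Fin f)} (hT : Injective T) {t : ℕ → ℝ} (ht : Injective t)
    {v : ℕ → EuclideanSpace ℝ (Fin (w * f))}
    (hv : ∀ i : ℕ, ∀ j : Fin (w * f),
      v i j = T (t (i + j.val / f)) ⟨j.val % f, Nat.mod_lt _ hf⟩) :
    Injective v := by
  have hfirst : ∀ i, ∀ p : Fin f,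
      v i ⟨p, p.2.trans_le (Nat.le_mul_of_pos_left f hw)⟩ = T (t i) p := by
    intro i p
    rw [hv]
    simp only [Nat.div_eq_of_lt p.2, Nat.mod_eq_of_lt p.2, add_zero]
  intro i j hij
  refine ht (hT ?_)
  ext p
  rw [← hfirst, ← hfirst, hij]

theorem universal_event_detection
    (f w : ℕ) (hf : 1 ≤ f) (hw : 2 ≤ w)
    (s : ℝ) (hs : 0 < s) (α : ℝ) (N : ℕ)
    (T : ℝ → EuclideanSpace ℝ (Fin f)) (hTinj : Function.Injective T)
    (t : ℕ → ℝ) (ht : ∀ i : ℕ, t i = α + ((i : ℝ) - 1) * s)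
    (v : ℕ → EuclideanSpace ℝ (Fin (w * f)))
    (hv : ∀ i : ℕ, ∀ j : Fin (w * f),
      v i j = T (t (i + j.val / f)) ⟨j.val % f, Nat.mod_lt _ (by omega)⟩)
    (y : ℕ → ℝ)
    (ε : ℝ) (hε : 0 < ε) :
    ∃ (Q : ℕ) (β : Fin Q → ℝ) (u : Fin Q → EuclideanSpace ℝ (Fin (w * f))) (b : Fin Q → ℝ),
      ∀ i : ℕ, 1 ≤ i → i ≤ N - w + 1 →
        |(∑ j : Fin Q, β j * sigmoid ((inner ℝ (u j) (v i) : ℝ) + b j)) - y i| < ε := by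
  have htinj : Injective t := by
    intro i j hij
    rw [ht, ht] at hij
    exact_mod_cast sub_left_inj.1 (mul_right_cancel₀ hs.ne' (add_left_cancel hij))
  have hvinj : Injective v := injective_of_eq_window hf (by omega) hTinj htinj hv
  obtain ⟨g, hg, hgy⟩ :=
    exists_mem_sigmoidNetworks_forall_abs_sub_lt (Finset.Icc 1 (N - w + 1)) hvinj.injOn y hε
  obtain ⟨Q, β, u, b, hgsum⟩ := exists_eq_sum_of_mem_sigmoidNetworks hg
  refine ⟨Q, β, u, b, fun i hi₁ hi₂ => ?_⟩
  rw [hgsum]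
  exact hgy i (Finset.mem_Icc.2 ⟨hi₁, hi₂⟩)
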